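/- Let (A,κ) be a κ-connected digital image. Then the digital m-topological complexity of A equals the digital m-homotopic distance between the two projections: TC^m(A,κ) = D_m(pr₁, pr₂), where pr₁, pr₂ : (A × A, NP(κ,κ)) → (A,κ) are the projections. -/
import Mathlib


namespace DigitalTop

/-- The `c_p`-adjacency relation on `ℤ^r`: distinct points such that at most `p`
coordinates differ by exactly `1`, and all coordinates not differing by `1` are equal. -/
def cAdj (r p : ℕ) (a a' : Fin r → ℤ) : Prop :=
  a ≠ a' ∧
  ((Finset.univ.filter fun q : Fin r => |a q - a' q| = 1).card ≤ p) ∧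
  ∀ s : Fin r, |a s - a' s| ≠ 1 → a s = a' s

/-- The `2`-adjacency on the digital interval in `ℤ`. -/
def intAdj (t t' : ℤ) : Prop := |t - t'| = 1

/-- Digital `(adjA, adjB)`-continuity of `f` on `A`, mapping into `B`. -/
def DigContinuousOn {α β : Type*} (adjA : α → α → Prop) (adjB : β → β → Prop)
    (A : Set α) (B : Set β) (f : α → β) : Prop :=
  (∀ a ∈ A, f a ∈ B) ∧
  ∀ a ∈ A, ∀ a' ∈ A, adjA a a' → f a = f a' ∨ adjB (f a) (f a')

/-- `K : A × [0,z]_ℤ → B` is a digital homotopy (in `z` steps): each stage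
`K (·, t)` is digitally continuous and each track `K (a, ·)` is digitally
`(2, adjB)`-continuous on `[0,z]_ℤ`. -/
def IsDigHomotopy {α β : Type*} (adjA : α → α → Prop) (adjB : β → β → Prop)
    (A : Set α) (B : Set β) (z : ℕ) (K : α → ℤ → β) : Prop :=
  (∀ t ∈ Set.Icc (0 : ℤ) (z : ℤ), DigContinuousOn adjA adjB A B fun a => K a t) ∧
  ∀ a ∈ A, ∀ t ∈ Set.Icc (0 : ℤ) (z : ℤ), ∀ t' ∈ Set.Icc (0 : ℤ) (z : ℤ),
    intAdj t t' → K a t = K a t' ∨ adjB (K a t) (K a t')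

/-- `h` and `k` are digitally `(adjA, adjB)`-homotopic on `A` (into `B`). -/
def DigHomotopic {α β : Type*} (adjA : α → α → Prop) (adjB : β → β → Prop)
    (A : Set α) (B : Set β) (h k : α → β) : Prop :=
  ∃ (z : ℕ) (K : α → ℤ → β),
    IsDigHomotopy adjA adjB A B z K ∧
    (∀ a ∈ A, K a 0 = h a) ∧ (∀ a ∈ A, K a (z : ℤ) = k a)

/-- `(A, adjA)` is digitally connected: any two points of `A` are joined by a
digital path in `A` whose consecutive points are equal or adjacent. -/
def DigConnected {α : Type*} (adjA : α → α → Prop) (A : Set α) : Prop :=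
  ∀ a ∈ A, ∀ b ∈ A, ∃ (n : ℕ) (f : ℕ → α),
    f 0 = a ∧ f n = b ∧ (∀ i ≤ n, f i ∈ A) ∧
    ∀ i < n, f i = f (i + 1) ∨ adjA (f i) (f (i + 1))

/-- `adj ≥_d adj'`: `adj` dominates `adj'`. -/
def Dominates {α : Type*} (adj adj' : α → α → Prop) : Prop :=
  ∀ a a', adj a a' → adj' a a'

/-- The normal (strong) product adjacency `NP(adjA, adjB)` on a product. -/
def NP {α β : Type*} (adjA : α → α → Prop) (adjB : β → β → Prop) :
    α × β → α × β → Prop :=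
  fun x y => x ≠ y ∧ (x.1 = y.1 ∨ adjA x.1 y.1) ∧ (x.2 = y.2 ∨ adjB x.2 y.2)

/-- The normal (strong) product adjacency `NP_n(adjB, …, adjB)` on `Bⁿ`. -/
def NPn {β : Type*} (adjB : β → β → Prop) (n : ℕ) :
    (Fin n → β) → (Fin n → β) → Prop :=
  fun x y => x ≠ y ∧ ∀ i, x i = y i ∨ adjB (x i) (y i)

/-- `X` satisfies the digital `m`-homotopic-distance condition for `h, k`: every
digitally continuous map `φ` from every `m`-dimensional digital complex `(P, c_δ)`
into `X` satisfies `h ∘ φ ≃ k ∘ φ`. -/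
def DmAt {α β : Type*} (m : ℕ) (adjA : α → α → Prop) (adjB : β → β → Prop)
    (X : Set α) (B : Set β) (h k : α → β) : Prop :=
  ∀ P : Set (Fin m → ℤ), P.Finite →
    ∀ δ : ℕ, 1 ≤ δ → δ ≤ m →
      ∀ φ : (Fin m → ℤ) → α,
        DigContinuousOn (cAdj m δ) adjA P X φ →
        DigHomotopic (cAdj m δ) adjB P B (h ∘ φ) (k ∘ φ)

/-- The digital `m`-homotopic distance `D_m(h, k)` (an element of `ℕ∞`,
`⊤` if no finite decomposition exists). -/
noncomputable def Dm {α β : Type*} (m : ℕ) (adjA : α → α → Prop) (adjB : β → β → Prop)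
    (A : Set α) (B : Set β) (h k : α → β) : ℕ∞ :=
  sInf {n : ℕ∞ | ∃ q : ℕ, n = (q : ℕ∞) ∧ ∃ X : Fin (q + 1) → Set α,
    A = ⋃ j, X j ∧ ∀ j, DmAt m adjA adjB (X j) B h k}

/-- The digital homotopic distance `D(h, k)`. -/
noncomputable def Ddist {α β : Type*} (adjA : α → α → Prop) (adjB : β → β → Prop)
    (A : Set α) (B : Set β) (h k : α → β) : ℕ∞ :=
  sInf {n : ℕ∞ | ∃ q : ℕ, n = (q : ℕ∞) ∧ ∃ X : Fin (q + 1) → Set α,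
    A = ⋃ j, X j ∧ ∀ j, DigHomotopic adjA adjB (X j) B h k}

/-- `X` satisfies the digital higher `m`-homotopic-distance condition for
`h₁, …, h_n`: pushed forward along any `φ` from an `m`-dimensional digital
complex into `X`, consecutive maps become digitally homotopic. -/
def DmAtH {α β : Type*} (m : ℕ) (adjA : α → α → Prop) (adjB : β → β → Prop)
    (X : Set α) (B : Set β) {n : ℕ} (h : Fin n → α → β) : Prop :=
  ∀ P : Set (Fin m → ℤ), P.Finite →
    ∀ δ : ℕ, 1 ≤ δ → δ ≤ m →
      ∀ φ : (Fin m → ℤ) → α,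
        DigContinuousOn (cAdj m δ) adjA P X φ →
        ∀ i : Fin n, ∀ hi : (i : ℕ) + 1 < n,
          DigHomotopic (cAdj m δ) adjB P B (h i ∘ φ) (h ⟨(i : ℕ) + 1, hi⟩ ∘ φ)

/-- The digital higher `m`-homotopic distance `D_m(h₁, …, h_n)`. -/
noncomputable def DmH {α β : Type*} (m : ℕ) (adjA : α → α → Prop) (adjB : β → β → Prop)
    (A : Set α) (B : Set β) {n : ℕ} (h : Fin n → α → β) : ℕ∞ :=
  sInf {k : ℕ∞ | ∃ q : ℕ, k = (q : ℕ∞) ∧ ∃ X : Fin (q + 1) → Set α,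
    A = ⋃ j, X j ∧ ∀ j, DmAtH m adjA adjB (X j) B h}

/-- The digital higher homotopic distance `D(h₁, …, h_n)`. -/
noncomputable def DdistH {α β : Type*} (adjA : α → α → Prop) (adjB : β → β → Prop)
    (A : Set α) (B : Set β) {n : ℕ} (h : Fin n → α → β) : ℕ∞ :=
  sInf {k : ℕ∞ | ∃ q : ℕ, k = (q : ℕ∞) ∧ ∃ X : Fin (q + 1) → Set α,
    A = ⋃ j, X j ∧ ∀ j, ∀ i : Fin n, ∀ hi : (i : ℕ) + 1 < n,
      DigHomotopic adjA adjB (X j) B (h i) (h ⟨(i : ℕ) + 1, hi⟩)}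

/-- `X` satisfies the digital `m`-LS-category condition in `A`: for every `φ` from an
`m`-dimensional digital complex into `X`, the composite with the inclusion
`X ↪ A` is digitally nullhomotopic in `A`. -/
def CatmAt {α : Type*} (m : ℕ) (adjA : α → α → Prop) (X A : Set α) : Prop :=
  ∀ P : Set (Fin m → ℤ), P.Finite →
    ∀ δ : ℕ, 1 ≤ δ → δ ≤ m →
      ∀ φ : (Fin m → ℤ) → α,
        DigContinuousOn (cAdj m δ) adjA P X φ →
        ∃ a₀ ∈ A, DigHomotopic (cAdj m δ) adjA P A φ (fun _ => a₀)

/-- The digital `m`-Lusternik–Schnirelmann category `cat_m(A, adjA)`. -/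
noncomputable def Catm {α : Type*} (m : ℕ) (adjA : α → α → Prop) (A : Set α) : ℕ∞ :=
  sInf {n : ℕ∞ | ∃ q : ℕ, n = (q : ℕ∞) ∧ ∃ X : Fin (q + 1) → Set α,
    A = ⋃ j, X j ∧ ∀ j, CatmAt m adjA (X j) A}

/-- `X` satisfies the digital `m`-LS-category condition for the map `h`. -/
def CatmMapAt {α β : Type*} (m : ℕ) (adjA : α → α → Prop) (adjB : β → β → Prop)
    (X : Set α) (B : Set β) (h : α → β) : Prop :=
  ∀ P : Set (Fin m → ℤ), P.Finite →
    ∀ δ : ℕ, 1 ≤ δ → δ ≤ m →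
      ∀ φ : (Fin m → ℤ) → α,
        DigContinuousOn (cAdj m δ) adjA P X φ →
        ∃ b₀ ∈ B, DigHomotopic (cAdj m δ) adjB P B (h ∘ φ) (fun _ => b₀)

/-- The digital `m`-Lusternik–Schnirelmann category `cat_m(h; adjA, adjB)` of a map. -/
noncomputable def CatmMap {α β : Type*} (m : ℕ) (adjA : α → α → Prop) (adjB : β → β → Prop)
    (A : Set α) (B : Set β) (h : α → β) : ℕ∞ :=
  sInf {n : ℕ∞ | ∃ q : ℕ, n = (q : ℕ∞) ∧ ∃ X : Fin (q + 1) → Set α,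
    A = ⋃ j, X j ∧ ∀ j, CatmMapAt m adjA adjB (X j) B h}

/-- The digital path space `A^{[0,z]_ℤ}`: digitally `(2, adjA)`-continuous maps
`[0,z]_ℤ → A`. -/
def PathSpace {α : Type*} (adjA : α → α → Prop) (A : Set α) (z : ℕ) : Set (ℤ → α) :=
  {ϑ | DigContinuousOn intAdj adjA (Set.Icc (0 : ℤ) (z : ℤ)) A ϑ}

/-- The adjacency on the digital path space `A^{[0,z]_ℤ}`. -/
def pathAdj {α : Type*} (adjA : α → α → Prop) (z : ℕ) : (ℤ → α) → (ℤ → α) → Prop :=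
  fun ϑ θ => ∀ t ∈ Set.Icc (0 : ℤ) (z : ℤ), ∀ t' ∈ Set.Icc (0 : ℤ) (z : ℤ),
    (t = t' ∨ intAdj t t') → ϑ t = θ t' ∨ adjA (ϑ t) (θ t')

/-- The digital `m`-topological complexity `TC^m(A, adjA)`: the least `q` such
that `A × A = X_0 ∪ ⋯ ∪ X_q` where each `X_j` carries a digitally continuous
`s_j : X_j → A^{[0,z]_ℤ}` with `π ∘ s_j ∘ φ ≃ φ` for every digitally continuous
`φ : P → X_j` from every `m`-dimensional digital complex `(P, c_δ)`. -/
noncomputable def TCm {α : Type*} (m : ℕ) (adjA : α → α → Prop) (A : Set α) : ℕ∞ :=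
  sInf {n : ℕ∞ | ∃ q : ℕ, n = (q : ℕ∞) ∧ ∃ X : Fin (q + 1) → Set (α × α),
    (A ×ˢ A) = ⋃ j, X j ∧
    ∀ j, ∃ (z : ℕ) (s : α × α → ℤ → α),
      DigContinuousOn (NP adjA adjA) (pathAdj adjA z) (X j) (PathSpace adjA A z) s ∧
      ∀ P : Set (Fin m → ℤ), P.Finite →
        ∀ δ : ℕ, 1 ≤ δ → δ ≤ m →
          ∀ φ : (Fin m → ℤ) → α × α,
            DigContinuousOn (cAdj m δ) (NP adjA adjA) P (X j) φ →
            DigHomotopic (cAdj m δ) (NP adjA adjA) P (A ×ˢ A)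
              (fun x => (s (φ x) 0, s (φ x) (z : ℤ))) φ}

/-- The digital `m`-topological complexity `TC^m(h; adjA, adjB)` of a map
`h : (A, adjA) → (B, adjB)`, using `π_h(ϑ) = (ϑ(0), h(ϑ(z)))`. -/
noncomputable def TCmMap {α β : Type*} (m : ℕ) (adjA : α → α → Prop) (adjB : β → β → Prop)
    (A : Set α) (B : Set β) (h : α → β) : ℕ∞ :=
  sInf {n : ℕ∞ | ∃ q : ℕ, n = (q : ℕ∞) ∧ ∃ X : Fin (q + 1) → Set (α × β),
    (A ×ˢ B) = ⋃ j, X j ∧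
    ∀ j, ∃ (z : ℕ) (s : α × β → ℤ → α),
      DigContinuousOn (NP adjA adjB) (pathAdj adjA z) (X j) (PathSpace adjA A z) s ∧
      ∀ P : Set (Fin m → ℤ), P.Finite →
        ∀ δ : ℕ, 1 ≤ δ → δ ≤ m →
          ∀ φ : (Fin m → ℤ) → α × β,
            DigContinuousOn (cAdj m δ) (NP adjA adjB) P (X j) φ →
            DigHomotopic (cAdj m δ) (NP adjA adjB) P (A ×ˢ B)
              (fun x => (s (φ x) 0, h (s (φ x) (z : ℤ)))) φ}

/-- A digital fibration: a digitally continuous map with the digital homotopy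
lifting property with respect to every digital image `(B, c_δ) ⊆ ℤ^d`. -/
def DigitalFibration {r r' : ℕ} (p p' : ℕ) (A : Set (Fin r → ℤ)) (A' : Set (Fin r' → ℤ))
    (h : (Fin r → ℤ) → (Fin r' → ℤ)) : Prop :=
  DigContinuousOn (cAdj r p) (cAdj r' p') A A' h ∧
  ∀ (d : ℕ) (B : Set (Fin d → ℤ)) (δ : ℕ), 1 ≤ δ → δ ≤ d →
    ∀ k : (Fin d → ℤ) → (Fin r → ℤ),
      DigContinuousOn (cAdj d δ) (cAdj r p) B A k →
      ∀ (z : ℕ) (K : (Fin d → ℤ) → ℤ → (Fin r' → ℤ)),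
        IsDigHomotopy (cAdj d δ) (cAdj r' p') B A' z K →
        (∀ b ∈ B, K b 0 = h (k b)) →
        ∃ K' : (Fin d → ℤ) → ℤ → (Fin r → ℤ),
          IsDigHomotopy (cAdj d δ) (cAdj r p) B A z K' ∧
          (∀ b ∈ B, ∀ t ∈ Set.Icc (0 : ℤ) (z : ℤ), h (K' b t) = K b t) ∧
          (∀ b ∈ B, K' b 0 = k b)

/-- A digital homotopy equivalence `ω : (A, adjA) → (B, adjB)`. -/
def DigHomotopyEquiv {α β : Type*} (adjA : α → α → Prop) (adjB : β → β → Prop)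
    (A : Set α) (B : Set β) (ω : α → β) : Prop :=
  DigContinuousOn adjA adjB A B ω ∧
  ∃ ω' : β → α, DigContinuousOn adjB adjA B A ω' ∧
    DigHomotopic adjA adjA A A (ω' ∘ ω) id ∧
    DigHomotopic adjB adjB B B (ω ∘ ω') id

section Helpers

variable {α β : Type*} {adjA : α → α → Prop} {adjB : β → β → Prop} {A : Set α} {B : Set β}

lemma digHomotopic_symm {h k : α → β} (H : DigHomotopic adjA adjB A B h k) :
    DigHomotopic adjA adjB A B k h := by
  obtain ⟨z, K, ⟨hst, htr⟩, h0, hz⟩ := H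
  refine ⟨z, fun a t => K a ((z : ℤ) - t), ⟨?_, ?_⟩, ?_, ?_⟩
  · intro t ht
    obtain ⟨ht0, htz⟩ := Set.mem_Icc.mp ht
    exact hst ((z : ℤ) - t) (Set.mem_Icc.mpr ⟨by linarith, by linarith⟩)
  · intro a ha t ht t' ht' hadj
    obtain ⟨ht0, htz⟩ := Set.mem_Icc.mp ht
    obtain ⟨ht0', htz'⟩ := Set.mem_Icc.mp ht'
    have hadj' : intAdj ((z:ℤ)-t) ((z:ℤ)-t') := by
      unfold intAdj at *
      rw [show (z:ℤ) - t - ((z:ℤ) - t') = t' - t by ring, abs_sub_comm]; exact hadj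
    exact htr a ha _ (Set.mem_Icc.mpr ⟨by linarith, by linarith⟩) _
      (Set.mem_Icc.mpr ⟨by linarith, by linarith⟩) hadj'
  · intro a ha; show K a ((z:ℤ) - 0) = k a; rw [sub_zero]; exact hz a ha
  · intro a ha; show K a ((z:ℤ) - (z:ℤ)) = h a; rw [sub_self]; exact h0 a ha

lemma digHomotopic_trans {h k l : α → β} (H1 : DigHomotopic adjA adjB A B h k)
    (H2 : DigHomotopic adjA adjB A B k l) : DigHomotopic adjA adjB A B h l := by
  obtain ⟨z1, K1, ⟨hst1, htr1⟩, h10, h1z⟩ := H1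
  obtain ⟨z2, K2, ⟨hst2, htr2⟩, h20, h2z⟩ := H2
  refine ⟨z1 + z2, fun a t => if t ≤ (z1 : ℤ) then K1 a t else K2 a (t - z1), ⟨?_, ?_⟩, ?_, ?_⟩
  · intro t ht
    by_cases hc : t ≤ (z1 : ℤ)
    · simpa [hc] using hst1 t ⟨ht.1, hc⟩
    · have h2 : t - z1 ∈ Set.Icc (0 : ℤ) (z2 : ℤ) := by
        constructor <;> [linarith [not_le.mp hc]; · push_cast at ht ⊢; linarith [ht.2]]
      simpa [hc] using hst2 (t - z1) h2
  · intro a ha t ht t' ht' hadj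
    have hmid : K1 a (z1 : ℤ) = K2 a 0 := by rw [h1z a ha, h20 a ha]
    have habs : t = t' + 1 ∨ t' = t + 1 := by
      unfold intAdj at hadj; rcases abs_eq (by norm_num : (0:ℤ) ≤ 1) |>.mp hadj with h | h <;> omega
    by_cases hc : t ≤ (z1 : ℤ) <;> by_cases hc' : t' ≤ (z1 : ℤ)
    · simpa [hc, hc'] using htr1 a ha t ⟨ht.1, hc⟩ t' ⟨ht'.1, hc'⟩ hadj
    · -- t ≤ z1 < t', so t' = t + 1, t = z1
      have ht'z : t' = (z1 : ℤ) + 1 := by omega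
      have htz : t = (z1 : ℤ) := by omega
      have h1le : (1 : ℤ) ≤ (z2 : ℤ) := by
        have := ht'.2; push_cast at this; omega
      have := htr2 a ha 0 ⟨le_refl _, by exact_mod_cast Nat.cast_nonneg z2⟩ 1
        ⟨by norm_num, h1le⟩ (by unfold intAdj; norm_num)
      simp only [hc, hc', if_true, if_false]
      rw [htz, hmid, ht'z]
      simpa using this
    · have htz : t = (z1 : ℤ) + 1 := by omega
      have ht'z : t' = (z1 : ℤ) := by omega
      have h1le : (1 : ℤ) ≤ (z2 : ℤ) := by
        have := ht.2; push_cast at this; omega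
      have := htr2 a ha 1 ⟨by norm_num, h1le⟩ 0
        ⟨le_refl _, by exact_mod_cast Nat.cast_nonneg z2⟩ (by unfold intAdj; norm_num)
      simp only [hc, hc', if_true, if_false]
      rw [ht'z, hmid, htz]
      simpa using this
    · have h1 : t - z1 ∈ Set.Icc (0 : ℤ) (z2 : ℤ) := by
        constructor
        · linarith [not_le.mp hc]
        · have := ht.2; push_cast at this ⊢; linarith
      have h2 : t' - z1 ∈ Set.Icc (0 : ℤ) (z2 : ℤ) := by
        constructor
        · linarith [not_le.mp hc']
        · have := ht'.2; push_cast at this ⊢; linarith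
      have hadj' : intAdj (t - z1) (t' - z1) := by
        unfold intAdj at *; rw [show t - z1 - (t' - z1) = t - t' by ring]; exact hadj
      simpa [hc, hc'] using htr2 a ha _ h1 _ h2 hadj'
  · intro a ha
    have : (0 : ℤ) ≤ (z1 : ℤ) := Nat.cast_nonneg z1
    simpa [this] using h10 a ha
  · intro a ha
    show (if ((z1 + z2 : ℕ) : ℤ) ≤ (z1 : ℤ) then K1 a ((z1 + z2 : ℕ) : ℤ)
        else K2 a (((z1 + z2 : ℕ) : ℤ) - z1)) = l a
    by_cases hz0 : z2 = 0
    · subst hz0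
      rw [if_pos (by push_cast; omega), show ((z1 + 0 : ℕ) : ℤ) = (z1 : ℤ) by norm_num,
        h1z a ha, ← h20 a ha]
      simpa using h2z a ha
    · rw [if_neg (by push_cast; omega),
        show ((z1 + z2 : ℕ) : ℤ) - z1 = (z2 : ℤ) by push_cast; ring]
      exact h2z a ha

lemma digHomotopic_fst {adjP : α → α → Prop} {P : Set α} {κ : β → β → Prop} {A : Set β}
    {F G : α → β × β} (H : DigHomotopic adjP (NP κ κ) P (A ×ˢ A) F G) :
    DigHomotopic adjP κ P A (fun x => (F x).1) (fun x => (G x).1) := by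
  obtain ⟨z, K, ⟨hst, htr⟩, h0, hz⟩ := H
  refine ⟨z, fun a t => (K a t).1, ⟨?_, ?_⟩, ?_, ?_⟩
  · intro t ht
    refine ⟨fun a ha => ((hst t ht).1 a ha).1, fun a ha a' ha' hadj => ?_⟩
    rcases (hst t ht).2 a ha a' ha' hadj with h | h
    · exact Or.inl (congrArg Prod.fst h)
    · exact h.2.1
  · intro a ha t ht t' ht' hadj
    rcases htr a ha t ht t' ht' hadj with h | h
    · exact Or.inl (congrArg Prod.fst h)
    · exact h.2.1
  · intro a ha; exact congrArg Prod.fst (h0 a ha)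
  · intro a ha; exact congrArg Prod.fst (hz a ha)

lemma digHomotopic_snd {adjP : α → α → Prop} {P : Set α} {κ : β → β → Prop} {A : Set β}
    {F G : α → β × β} (H : DigHomotopic adjP (NP κ κ) P (A ×ˢ A) F G) :
    DigHomotopic adjP κ P A (fun x => (F x).2) (fun x => (G x).2) := by
  obtain ⟨z, K, ⟨hst, htr⟩, h0, hz⟩ := H
  refine ⟨z, fun a t => (K a t).2, ⟨?_, ?_⟩, ?_, ?_⟩
  · intro t ht
    refine ⟨fun a ha => ((hst t ht).1 a ha).2, fun a ha a' ha' hadj => ?_⟩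
    rcases (hst t ht).2 a ha a' ha' hadj with h | h
    · exact Or.inl (congrArg Prod.snd h)
    · exact h.2.2
  · intro a ha t ht t' ht' hadj
    rcases htr a ha t ht t' ht' hadj with h | h
    · exact Or.inl (congrArg Prod.snd h)
    · exact h.2.2
  · intro a ha; exact congrArg Prod.snd (h0 a ha)
  · intro a ha; exact congrArg Prod.snd (hz a ha)

/-- Evaluating a digitally continuous family of paths gives a digital homotopy
between the endpoint maps. -/
lemma pathEval {γ β : Type*} {adjP : γ → γ → Prop} {P : Set γ} {κ : β → β → Prop} {A : Set β}
    {X : Set (β × β)} {z : ℕ} {s : β × β → ℤ → β}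
    (hs : DigContinuousOn (NP κ κ) (pathAdj κ z) X (PathSpace κ A z) s)
    {φ : γ → β × β} (hφ : DigContinuousOn adjP (NP κ κ) P X φ) :
    DigHomotopic adjP κ P A (fun x => s (φ x) 0) (fun x => s (φ x) (z : ℤ)) := by
  refine ⟨z, fun a t => s (φ a) t, ⟨?_, ?_⟩, fun a _ => rfl, fun a _ => rfl⟩
  · intro t ht
    refine ⟨fun a ha => (hs.1 (φ a) (hφ.1 a ha)).1 t ht, fun a ha a' ha' hadj => ?_⟩
    show s (φ a) t = s (φ a') t ∨ κ (s (φ a) t) (s (φ a') t)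
    rcases hφ.2 a ha a' ha' hadj with heq | hnp
    · exact Or.inl (by rw [heq])
    · rcases hs.2 (φ a) (hφ.1 a ha) (φ a') (hφ.1 a' ha') hnp with seq | sadj
      · exact Or.inl (congrFun seq t)
      · exact sadj t ht t ht (Or.inl rfl)
  · intro a ha t ht t' ht' hadj
    exact (hs.1 (φ a) (hφ.1 a ha)).2 t ht t' ht' hadj

/-- The per-piece equivalence between the TC-condition and the `D_m`-condition
for the two projections. -/
lemma piece_iff {β : Type*} {κ : β → β → Prop} {A : Set β} (m : ℕ)
    (X : Set (β × β)) (hX : X ⊆ A ×ˢ A) :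
    (∃ (z : ℕ) (s : β × β → ℤ → β),
      DigContinuousOn (NP κ κ) (pathAdj κ z) X (PathSpace κ A z) s ∧
      ∀ P : Set (Fin m → ℤ), P.Finite →
        ∀ δ : ℕ, 1 ≤ δ → δ ≤ m →
          ∀ φ : (Fin m → ℤ) → β × β,
            DigContinuousOn (cAdj m δ) (NP κ κ) P X φ →
            DigHomotopic (cAdj m δ) (NP κ κ) P (A ×ˢ A)
              (fun x => (s (φ x) 0, s (φ x) (z : ℤ))) φ)
    ↔ DmAt m (NP κ κ) κ X A Prod.fst Prod.snd := by
  constructor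
  · rintro ⟨z, s, hs, hsec⟩ P hP δ h1 h2 φ hφ
    have H1 := hsec P hP δ h1 h2 φ hφ
    have Hf := digHomotopic_fst H1
    have Hs := digHomotopic_snd H1
    have Hmid := pathEval hs hφ
    exact digHomotopic_trans (digHomotopic_trans (digHomotopic_symm Hf) Hmid) Hs
  · intro hD
    refine ⟨0, fun x _ => x.1, ⟨?_, ?_⟩, ?_⟩
    · intro x hx
      exact ⟨fun t _ => (Set.mem_prod.mp (hX hx)).1, fun t _ t' _ _ => Or.inl rfl⟩
    · intro x hx x' hx' hnp
      rcases hnp.2.1 with heq | hadj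
      · exact Or.inl (funext fun _ => heq)
      · exact Or.inr (fun t _ t' _ _ => Or.inr hadj)
    · intro P hP δ h1 h2 φ hφ
      obtain ⟨z', K, ⟨hst, htr⟩, h0, hz⟩ := hD P hP δ h1 h2 φ hφ
      refine ⟨z', fun a t => ((φ a).1, K a t), ⟨?_, ?_⟩, ?_, ?_⟩
      · intro t ht
        refine ⟨fun a ha => Set.mem_prod.mpr
          ⟨(Set.mem_prod.mp (hX (hφ.1 a ha))).1, (hst t ht).1 a ha⟩,
          fun a ha a' ha' hadj => ?_⟩
        show (((φ a).1 : β), K a t) = ((φ a').1, K a' t) ∨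
          NP κ κ (((φ a).1 : β), K a t) ((φ a').1, K a' t)
        by_cases hpair : (((φ a).1 : β), K a t) = ((φ a').1, K a' t)
        · exact Or.inl hpair
        · have hfst : (φ a).1 = (φ a').1 ∨ κ (φ a).1 (φ a').1 := by
            rcases hφ.2 a ha a' ha' hadj with heq | hnp
            · exact Or.inl (congrArg Prod.fst heq)
            · exact hnp.2.1
          exact Or.inr ⟨hpair, hfst, (hst t ht).2 a ha a' ha' hadj⟩
      · intro a ha t ht t' ht' hadj
        show (((φ a).1 : β), K a t) = ((φ a).1, K a t') ∨
          NP κ κ (((φ a).1 : β), K a t) ((φ a).1, K a t')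
        by_cases hpair : (((φ a).1 : β), K a t) = ((φ a).1, K a t')
        · exact Or.inl hpair
        · exact Or.inr ⟨hpair, Or.inl rfl, htr a ha t ht t' ht' hadj⟩
      · intro a ha
        exact congrArg (fun y => (((φ a).1 : β), y)) (h0 a ha)
      · intro a ha
        show (((φ a).1 : β), K a ((z' : ℕ) : ℤ)) = φ a
        rw [hz a ha]
        exact Prod.mk.eta

end Helpers

/-- For a κ-connected digital image `A`,
`TC^m(A,κ) = D_m(pr₁, pr₂)` for the projections `pr₁, pr₂ : (A×A, NP(κ,κ)) → (A,κ)`. -/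
theorem tcm_eq_dm {r p : ℕ} (hp1 : 1 ≤ p) (hpr : p ≤ r)
    (A : Set (Fin r → ℤ)) (hAconn : DigConnected (cAdj r p) A)
    (m : ℕ) (hm : 0 < m) :
    TCm m (cAdj r p) A
      = Dm m (NP (cAdj r p) (cAdj r p)) (cAdj r p) (A ×ˢ A) A Prod.fst Prod.snd := by
  unfold TCm Dm
  congr 1
  ext n
  constructor
  · rintro ⟨q, hq, X, hcov, hj⟩
    refine ⟨q, hq, X, hcov, fun j => ?_⟩
    have hXsub : X j ⊆ A ×ˢ A := by rw [hcov]; exact Set.subset_iUnion X j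
    exact (piece_iff m (X j) hXsub).mp (hj j)
  · rintro ⟨q, hq, X, hcov, hj⟩
    refine ⟨q, hq, X, hcov, fun j => ?_⟩
    have hXsub : X j ⊆ A ×ˢ A := by rw [hcov]; exact Set.subset_iUnion X j
    exact (piece_iff m (X j) hXsub).mpr (hj j)

end DigitalTop
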